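/- Global operator norm error bounds for the first-order Trotter formulae: let T > 0, let L be a positive integer, and suppose F1, F2, F1', F2' ≥ 0 satisfy |f1(t)| ≤ F1, |f2(t)| ≤ F2, |f1'(t)| ≤ F1', |f2'(t)| ≤ F2' for all t ∈ [0,T]. Then ‖∏_{l=1}^{L} U_{s,1}(lT/L, (l-1)T/L) - U(T,0)‖ ≤ α_s T²/L + β_s T³/L², where α_s = (1/2) F1' ‖H1‖ + (1/2) F2' ‖H2‖ + (1/2) F1 F2 ‖[H1,H2]‖ and β_s = (1/6) F1 F2' ‖[H1,H2]‖, and ‖∏_{l=1}^{L} U_{g,1}(lT/L, (l-1)T/L) - U(T,0)‖ ≤ (1/2) F1 F2 ‖[H1,H2]‖ T²/L. (In the products, the factor with larger l is applied later, i.e., stands to the left.) -/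

import Mathlib

open scoped Matrix.Norms.L2Operator
open MeasureTheory

noncomputable section

/-- Square `n × n` complex matrices. -/
abbrev Mat (n : ℕ) := Matrix (Fin n) (Fin n) ℂ

/-- The matrix exponential. -/
noncomputable def mexp {n : ℕ} (A : Mat n) : Mat n := NormedSpace.exp A

/-- The commutator `[A,B] = AB - BA`. -/
def matComm {n : ℕ} (A B : Mat n) : Mat n := A * B - B * A

/-- The time-dependent Hamiltonian `H(t) = f1(t) H1 + f2(t) H2`. -/
def Ham {n : ℕ} (H1 H2 : Mat n) (f1 f2 : ℝ → ℝ) (t : ℝ) : Mat n :=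
  (f1 t : ℂ) • H1 + (f2 t : ℂ) • H2

/-- `IsEvolution H1 H2 f1 f2 U` : `U t s` is the evolution operator, i.e. it solves
`∂ₜ U(t,s) = -i H(t) U(t,s)` with `U(s,s) = I`. -/
def IsEvolution {n : ℕ} (H1 H2 : Mat n) (f1 f2 : ℝ → ℝ) (U : ℝ → ℝ → Mat n) : Prop :=
  (∀ s : ℝ, U s s = 1) ∧
    ∀ s t : ℝ, HasDerivAt (fun τ => U τ s) ((-Complex.I) • (Ham H1 H2 f1 f2 t * U t s)) t

/-- First-order standard Trotter step from time `a` to time `b`: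
`U_{s,1}(b,a) = exp(-i (b-a) f2(b) H2) exp(-i (b-a) f1(b) H1)`. -/
noncomputable def Us1 {n : ℕ} (H1 H2 : Mat n) (f1 f2 : ℝ → ℝ) (b a : ℝ) : Mat n :=
  mexp ((-Complex.I * (((b - a) * f2 b : ℝ) : ℂ)) • H2) *
    mexp ((-Complex.I * (((b - a) * f1 b : ℝ) : ℂ)) • H1)

/-- First-order generalized Trotter step from time `a` to time `b`:
`U_{g,1}(b,a) = exp(-i (∫_a^b f2) H2) exp(-i (∫_a^b f1) H1)`. -/
noncomputable def Ug1 {n : ℕ} (H1 H2 : Mat n) (f1 f2 : ℝ → ℝ) (b a : ℝ) : Mat n :=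
  mexp ((-Complex.I * ((∫ s in a..b, f2 s : ℝ) : ℂ)) • H2) *
    mexp ((-Complex.I * ((∫ s in a..b, f1 s : ℝ) : ℂ)) • H1)

/-- Second-order standard Trotter step from time `a` to time `b` (with midpoint `(a+b)/2`):
`U_{s,2}(b,a) = exp(-i (b-a)/2 f1((a+b)/2) H1) exp(-i (b-a) f2((a+b)/2) H2)
  exp(-i (b-a)/2 f1((a+b)/2) H1)`. -/
noncomputable def Us2 {n : ℕ} (H1 H2 : Mat n) (f1 f2 : ℝ → ℝ) (b a : ℝ) : Mat n :=
  mexp ((-Complex.I * (((b - a) / 2 * f1 ((a + b) / 2) : ℝ) : ℂ)) • H1) *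
    mexp ((-Complex.I * (((b - a) * f2 ((a + b) / 2) : ℝ) : ℂ)) • H2) *
    mexp ((-Complex.I * (((b - a) / 2 * f1 ((a + b) / 2) : ℝ) : ℂ)) • H1)

/-- Second-order generalized Trotter step from time `a` to time `b`:
`U_{g,2}(b,a) = exp(-i (∫_{(a+b)/2}^b f1) H1) exp(-i (∫_a^b f2) H2)
  exp(-i (∫_a^{(a+b)/2} f1) H1)`. -/
noncomputable def Ug2 {n : ℕ} (H1 H2 : Mat n) (f1 f2 : ℝ → ℝ) (b a : ℝ) : Mat n :=
  mexp ((-Complex.I * ((∫ s in ((a + b) / 2)..b, f1 s : ℝ) : ℂ)) • H1) *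
    mexp ((-Complex.I * ((∫ s in a..b, f2 s : ℝ) : ℂ)) • H2) *
    mexp ((-Complex.I * ((∫ s in a..((a + b) / 2), f1 s : ℝ) : ℂ)) • H1)

/-- `prodSteps f L = f (L-1) * ⋯ * f 1 * f 0` : the ordered product of the matrices
`f 0, …, f (L-1)`, where the factor with larger index stands to the left. -/
noncomputable def prodSteps {n : ℕ} (f : ℕ → Mat n) : ℕ → Mat n
  | 0 => 1
  | k + 1 => f k * prodSteps f k

/-- The `L`-step Trotter product `∏_{l=1}^{L} step(l T/L, (l-1) T/L)`, with the factor with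
larger `l` standing to the left. -/
noncomputable def trotterProd {n : ℕ} (step : ℝ → ℝ → Mat n) (T : ℝ) (L : ℕ) : Mat n :=
  prodSteps (fun l => step ((((l : ℝ) + 1) * T) / (L : ℝ)) (((l : ℝ) * T) / (L : ℝ))) L


/-!
A Trotter step `W(τ) = exp(-i φ₂(τ) H₂) exp(-i φ₁(τ) H₁)` solves the perturbed Schrödinger
equation `W' = -i H(τ) W + R(τ)`, where `R` collects the mismatch `φⱼ' - fⱼ` of the phases
and the commutator `[exp(-i φ₂ H₂), H₁]`, whose norm is at most `|φ₂| ‖[H₁, H₂]‖`. Since the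
exact propagator is unitary, `U(τ,t)⋆ W(τ)` has derivative `U(τ,t)⋆ R(τ)`, so the local error
`‖W(b) - U(b,t)‖` is bounded by a primitive of any bound on `‖R‖`. For the generalized step the
phases are exact and only the commutator term remains; for the standard step the mean value
theorem bounds the phase mismatch. All factors being unitary, the local errors of the `L` steps
simply add up.
-/

open NormedSpace

section CStarAlgebra
variable {A : Type*} [CStarAlgebra A]

lemma exp_mem_unitary_of_skewAdjoint {X : A} (hX : X ∈ skewAdjoint A) : exp X ∈ unitary A :=
  letI : NormedAlgebra ℚ A := .restrictScalars ℚ ℂ A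
  exp_mem_unitary_of_mem_skewAdjoint hX

lemma neg_I_smul_mem_skewAdjoint {H : A} (hH : IsSelfAdjoint H) (c : ℝ) :
    (-Complex.I * c) • H ∈ skewAdjoint A :=
  hH.smul_mem_skewAdjoint <| by simp [skewAdjoint.mem_iff]

lemma exp_neg_I_smul_mem_unitary {H : A} (hH : IsSelfAdjoint H) (c : ℝ) :
    exp ((-Complex.I * c) • H) ∈ unitary A :=
  exp_mem_unitary_of_skewAdjoint (neg_I_smul_mem_skewAdjoint hH c)

lemma IsSelfAdjoint.ofReal_smul_add_ofReal_smul {H1 H2 : A} (hH1 : IsSelfAdjoint H1)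
    (hH2 : IsSelfAdjoint H2) (c1 c2 : ℝ) : IsSelfAdjoint ((c1 : ℂ) • H1 + (c2 : ℂ) • H2) := by
  simp [IsSelfAdjoint, star_add, star_smul, hH1.star_eq, hH2.star_eq]

lemma hasDerivAt_exp_neg_I_smul (H : A) {φ : ℝ → ℝ} {g τ : ℝ} (hφ : HasDerivAt φ g τ) :
    HasDerivAt (fun s => exp ((-Complex.I * φ s) • H))
      ((-Complex.I * g) • (H * exp ((-Complex.I * φ τ) • H))) τ :=
  (hasDerivAt_exp_smul_const' H _).scomp τ (hφ.ofReal_comp.const_mul _)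

lemma norm_exp_mul_sub_mul_exp_le {X : A} (hX : X ∈ skewAdjoint A) (B : A) :
    ‖exp X * B - B * exp X‖ ≤ ‖X * B - B * X‖ := by
  have hexp (σ : ℝ) : exp (σ • X) ∈ unitary A :=
    exp_mem_unitary_of_skewAdjoint (skewAdjoint.smul_mem σ hX)
  have hderiv (σ : ℝ) : HasDerivAt (fun σ : ℝ => exp (σ • X) * B * exp ((1 - σ) • X))
      (exp (σ • X) * (X * B - B * X) * exp ((1 - σ) • X)) σ := by
    have h1 := hasDerivAt_exp_smul_const X σ
    have h2 := (hasDerivAt_exp_smul_const' X (1 - σ)).scomp σ ((hasDerivAt_id σ).const_sub 1)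
    refine ((h1.mul_const B).mul h2).congr_deriv ?_
    simp only [Function.comp_apply, neg_one_smul]
    noncomm_ring
  simpa using norm_image_sub_le_of_norm_deriv_le_segment_01'
    (fun σ _ => (hderiv σ).hasDerivWithinAt) fun σ _ => le_of_eq <| by
      rw [CStarRing.norm_mul_mem_unitary _ (hexp _), CStarRing.norm_mem_unitary_mul _ (hexp _)]

lemma norm_exp_neg_I_smul_mul_sub_le {H : A} (hH : IsSelfAdjoint H) (c : ℝ) (B : A) :
    ‖exp ((-Complex.I * c) • H) * B - B * exp ((-Complex.I * c) • H)‖ ≤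
      |c| * ‖H * B - B * H‖ := by
  refine (norm_exp_mul_sub_mul_exp_le (neg_I_smul_mem_skewAdjoint hH c) B).trans_eq ?_
  rw [smul_mul_assoc, mul_smul_comm, ← smul_sub, norm_smul]
  simp

def IsPropagator (H : ℝ → A) (U : ℝ → ℝ → A) : Prop :=
  (∀ s, U s s = 1) ∧ ∀ s t, HasDerivAt (fun τ => U τ s) ((-Complex.I) • (H t * U t s)) t

namespace IsPropagator
variable {H : ℝ → A} {U : ℝ → ℝ → A}

lemma hasDerivAt_star_mul (hU : IsPropagator H U) (hH : ∀ t, IsSelfAdjoint (H t))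
    {W R : ℝ → A} {t τ : ℝ} (hW : HasDerivAt W ((-Complex.I) • (H τ * W τ) + R τ) τ) :
    HasDerivAt (fun s => star (U s t) * W s) (star (U τ t) * R τ) τ := by
  refine ((hU.2 t τ).star.mul hW).congr_deriv ?_
  rw [star_smul, star_mul, (hH τ).star_eq]
  simp only [Complex.star_def, map_neg, Complex.conj_I, neg_neg, mul_add, mul_smul_comm,
    smul_mul_assoc, mul_assoc]
  module

lemma star_mul_eq (hU : IsPropagator H U) (hH : ∀ t, IsSelfAdjoint (H t)) {W : ℝ → A}
    (hW : ∀ τ, HasDerivAt W ((-Complex.I) • (H τ * W τ)) τ) (t τ : ℝ) :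
    star (U τ t) * W τ = W t := by
  have hG (τ : ℝ) : HasDerivAt (fun s => star (U s t) * W s) 0 τ := by
    simpa using hU.hasDerivAt_star_mul hH (R := 0) (by simpa using hW τ)
  rw [is_const_of_deriv_eq_zero (fun τ => (hG τ).differentiableAt) (fun τ => (hG τ).deriv) τ t,
    hU.1, star_one, one_mul]

lemma star_apply (hU : IsPropagator H U) (hH : ∀ t, IsSelfAdjoint (H t)) (a b : ℝ) :
    star (U a b) = U b a := by
  simpa [hU.1] using hU.star_mul_eq hH (hU.2 a) b a

lemma mem_unitary (hU : IsPropagator H U) (hH : ∀ t, IsSelfAdjoint (H t)) (a b : ℝ) :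
    U a b ∈ unitary A := by
  have hiso (a b : ℝ) : star (U a b) * U a b = 1 := by
    rw [hU.star_mul_eq hH (hU.2 b), hU.1]
  refine Unitary.mem_iff.mpr ⟨hiso a b, ?_⟩
  -- a left inverse need not be a right one in a C⋆-algebra; use `star (U a b) = U b a`
  simpa [hU.star_apply hH] using hiso b a

lemma mul_apply (hU : IsPropagator H U) (hH : ∀ t, IsSelfAdjoint (H t)) (c b a : ℝ) :
    U c b * U b a = U c a := by
  rw [← hU.star_mul_eq hH (hU.2 a) b c, ← mul_assoc,
    Unitary.mul_star_self_of_mem (hU.mem_unitary hH c b), one_mul]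

lemma norm_sub_le_of_hasDerivAt (hU : IsPropagator H U) (hH : ∀ t, IsSelfAdjoint (H t))
    {W R : ℝ → A} {B B' : ℝ → ℝ} {t b : ℝ} (htb : t ≤ b)
    (hW : ∀ τ, HasDerivAt W ((-Complex.I) • (H τ * W τ) + R τ) τ) (hWt : W t = 1)
    (hB : ∀ τ, HasDerivAt B (B' τ) τ) (hBt : B t = 0) (hR : ∀ τ ∈ Set.Ico t b, ‖R τ‖ ≤ B' τ) :
    ‖W b - U b t‖ ≤ B b := by
  have hG (τ : ℝ) : HasDerivAt (fun s => star (U s t) * W s - 1) (star (U τ t) * R τ) τ :=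
    (hU.hasDerivAt_star_mul hH (hW τ)).sub_const 1
  have hGb : ‖star (U b t) * W b - 1‖ ≤ B b :=
    image_norm_le_of_norm_deriv_right_le_deriv_boundary
      (fun τ _ => (hG τ).continuousAt.continuousWithinAt) (fun τ _ => (hG τ).hasDerivWithinAt)
      (by simp [hWt, hU.1, hBt]) hB
      (fun τ hτ => by
        rw [CStarRing.norm_mem_unitary_mul _ (Unitary.star_mem (hU.mem_unitary hH τ t))]
        exact hR τ hτ)
      ⟨htb, le_rfl⟩
  have hU_mul : U b t * (star (U b t) * W b - 1) = W b - U b t := by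
    rw [mul_sub, ← mul_assoc, Unitary.mul_star_self_of_mem (hU.mem_unitary hH b t), one_mul,
      mul_one]
  rwa [← hU_mul, CStarRing.norm_mem_unitary_mul _ (hU.mem_unitary hH b t)]

theorem norm_exp_mul_exp_sub_le {H1 H2 : A} (hH1 : IsSelfAdjoint H1) (hH2 : IsSelfAdjoint H2)
    {f1 f2 : ℝ → ℝ} (hU : IsPropagator (fun τ => (f1 τ : ℂ) • H1 + (f2 τ : ℂ) • H2) U)
    {φ1 φ2 g1 g2 : ℝ → ℝ} (hφ1 : ∀ τ, HasDerivAt φ1 (g1 τ) τ) (hφ2 : ∀ τ, HasDerivAt φ2 (g2 τ) τ)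
    {t b : ℝ} (htb : t ≤ b) (hφ1t : φ1 t = 0) (hφ2t : φ2 t = 0)
    {B B' : ℝ → ℝ} (hB : ∀ τ, HasDerivAt B (B' τ) τ) (hBt : B t = 0)
    (hbound : ∀ s ∈ Set.Ico t b, |g1 s - f1 s| * ‖H1‖ + |g2 s - f2 s| * ‖H2‖ +
      |g1 s| * |φ2 s| * ‖H1 * H2 - H2 * H1‖ ≤ B' s) :
    ‖exp ((-Complex.I * φ2 b) • H2) * exp ((-Complex.I * φ1 b) • H1) - U b t‖ ≤ B b := by
  set E1 : ℝ → A := fun s => exp ((-Complex.I * φ1 s) • H1)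
  set E2 : ℝ → A := fun s => exp ((-Complex.I * φ2 s) • H2)
  set R : ℝ → A := fun s =>
    (-Complex.I) • ((((g1 s - f1 s : ℝ) : ℂ) • H1 + ((g2 s - f2 s : ℝ) : ℂ) • H2) * (E2 s * E1 s))
      + (-Complex.I * g1 s) • ((E2 s * H1 - H1 * E2 s) * E1 s)
  have hW (τ : ℝ) : HasDerivAt (fun s => E2 s * E1 s)
      ((-Complex.I) • (((f1 τ : ℂ) • H1 + (f2 τ : ℂ) • H2) * (E2 τ * E1 τ)) + R τ) τ := by
    refine ((hasDerivAt_exp_neg_I_smul H2 (hφ2 τ)).mul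
      (hasDerivAt_exp_neg_I_smul H1 (hφ1 τ))).congr_deriv ?_
    simp only [R, Complex.ofReal_sub, sub_smul, add_mul, sub_mul, smul_mul_assoc, mul_smul_comm,
      smul_add, smul_sub, smul_smul, mul_assoc]
    module
  have hE1 (s : ℝ) : E1 s ∈ unitary A := exp_neg_I_smul_mem_unitary hH1 _
  have hE2 (s : ℝ) : E2 s ∈ unitary A := exp_neg_I_smul_mem_unitary hH2 _
  refine hU.norm_sub_le_of_hasDerivAt (fun τ => hH1.ofReal_smul_add_ofReal_smul hH2 _ _) htb hW
    (by simp [E1, E2, hφ1t, hφ2t]) hB hBt fun s hs => le_trans ?_ (hbound s hs)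
  have hcomm : ‖E2 s * H1 - H1 * E2 s‖ ≤ |φ2 s| * ‖H1 * H2 - H2 * H1‖ := by
    rw [norm_sub_rev (H1 * H2)]
    exact norm_exp_neg_I_smul_mul_sub_le hH2 _ _
  calc ‖R s‖
      ≤ ‖((g1 s - f1 s : ℝ) : ℂ) • H1 + ((g2 s - f2 s : ℝ) : ℂ) • H2‖ +
          |g1 s| * ‖E2 s * H1 - H1 * E2 s‖ := by
        refine (norm_add_le _ _).trans_eq ?_
        rw [norm_smul, norm_smul, CStarRing.norm_mul_mem_unitary _ (mul_mem (hE2 s) (hE1 s)),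
          CStarRing.norm_mul_mem_unitary _ (hE1 s)]
        simp
    _ ≤ |g1 s - f1 s| * ‖H1‖ + |g2 s - f2 s| * ‖H2‖ +
          |g1 s| * (|φ2 s| * ‖H1 * H2 - H2 * H1‖) := by
        gcongr
        refine (norm_add_le _ _).trans_eq ?_
        rw [norm_smul, norm_smul, Complex.norm_real, Complex.norm_real, Real.norm_eq_abs,
          Real.norm_eq_abs]
    _ = _ := by ring

end IsPropagator
end CStarAlgebra

lemma hasDerivAt_cubic_sub (a₁ a₂ a₃ t τ : ℝ) :
    HasDerivAt (fun s => a₁ * (s - t) + a₂ * (s - t) ^ 2 + a₃ * (s - t) ^ 3)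
      (a₁ + 2 * a₂ * (τ - t) + 3 * a₃ * (τ - t) ^ 2) τ := by
  have hu := (hasDerivAt_id' τ).sub_const t
  refine (((hu.const_mul a₁).add ((hu.pow 2).const_mul a₂)).add
    ((hu.pow 3).const_mul a₃)).congr_deriv ?_
  norm_num
  ring

lemma abs_sub_le_of_abs_deriv_le {f : ℝ → ℝ} (hf : Differentiable ℝ f) {a b C : ℝ}
    (hC : ∀ s ∈ Set.Icc a b, |deriv f s| ≤ C) {x y : ℝ} (hx : x ∈ Set.Icc a b)
    (hy : y ∈ Set.Icc a b) : |f y - f x| ≤ C * |y - x| :=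
  (convex_Icc a b).norm_image_sub_le_of_norm_deriv_le (fun s _ => hf s) hC hx hy

section TrotterStep
variable {n : ℕ} {H1 H2 : Mat n} {f1 f2 : ℝ → ℝ} {U : ℝ → ℝ → Mat n}

lemma Us1_mem_unitary (hH1 : H1.IsHermitian) (hH2 : H2.IsHermitian) (b a : ℝ) :
    Us1 H1 H2 f1 f2 b a ∈ unitary (Mat n) :=
  mul_mem (exp_neg_I_smul_mem_unitary hH2.isSelfAdjoint _)
    (exp_neg_I_smul_mem_unitary hH1.isSelfAdjoint _)

lemma Ug1_mem_unitary (hH1 : H1.IsHermitian) (hH2 : H2.IsHermitian) (b a : ℝ) :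
    Ug1 H1 H2 f1 f2 b a ∈ unitary (Mat n) :=
  mul_mem (exp_neg_I_smul_mem_unitary hH2.isSelfAdjoint _)
    (exp_neg_I_smul_mem_unitary hH1.isSelfAdjoint _)

lemma IsEvolution.isPropagator (hU : IsEvolution H1 H2 f1 f2 U) :
    IsPropagator (Ham H1 H2 f1 f2) U :=
  hU

lemma IsEvolution.norm_Ug1_sub_le (hU : IsEvolution H1 H2 f1 f2 U) (hH1 : H1.IsHermitian)
    (hH2 : H2.IsHermitian) (hf1 : Continuous f1) (hf2 : Continuous f2) {t b F1 F2 : ℝ}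
    (htb : t ≤ b) (hb1 : ∀ s ∈ Set.Icc t b, |f1 s| ≤ F1) (hb2 : ∀ s ∈ Set.Icc t b, |f2 s| ≤ F2) :
    ‖Ug1 H1 H2 f1 f2 b t - U b t‖ ≤ F1 * F2 * ‖matComm H1 H2‖ * (b - t) ^ 2 / 2 := by
  have hφ {f : ℝ → ℝ} (hf : Continuous f) (τ : ℝ) :
      HasDerivAt (fun τ => ∫ s in t..τ, f s) (f τ) τ :=
    intervalIntegral.integral_hasDerivAt_right (hf.intervalIntegrable _ _)
      (hf.stronglyMeasurableAtFilter _ _) hf.continuousAt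
  have hint {s : ℝ} (hs : s ∈ Set.Ico t b) : |∫ r in t..s, f2 r| ≤ F2 * (s - t) := by
    have := intervalIntegral.norm_integral_le_of_norm_le_const (a := t) (b := s) (f := f2)
      (C := F2) fun r hr => by
        rw [Set.uIoc_of_le hs.1] at hr
        exact hb2 r ⟨hr.1.le, hr.2.trans hs.2.le⟩
    rwa [Real.norm_eq_abs, abs_of_nonneg (sub_nonneg.mpr hs.1)] at this
  refine (hU.isPropagator.norm_exp_mul_exp_sub_le hH1.isSelfAdjoint hH2.isSelfAdjoint
    (hφ hf1) (hφ hf2) htb (by simp) (by simp)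
    (hasDerivAt_cubic_sub 0 (F1 * F2 * ‖matComm H1 H2‖ / 2) 0 t) (by simp)
    fun s hs => ?_).trans_eq (by ring)
  have hF1 : |f1 s| ≤ F1 := hb1 s (Set.Ico_subset_Icc_self hs)
  simp only [sub_self, abs_zero, zero_mul, zero_add, mul_zero, add_zero]
  calc |f1 s| * |∫ r in t..s, f2 r| * ‖matComm H1 H2‖
      ≤ F1 * (F2 * (s - t)) * ‖matComm H1 H2‖ :=
        mul_le_mul_of_nonneg_right
          (mul_le_mul hF1 (hint hs) (abs_nonneg _) ((abs_nonneg _).trans hF1)) (norm_nonneg _)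
    _ = 2 * (F1 * F2 * ‖matComm H1 H2‖ / 2) * (s - t) := by ring

lemma IsEvolution.norm_Us1_sub_le (hU : IsEvolution H1 H2 f1 f2 U) (hH1 : H1.IsHermitian)
    (hH2 : H2.IsHermitian) (hf1 : Differentiable ℝ f1) (hf2 : Differentiable ℝ f2)
    {t b F1 F2 F1' F2' : ℝ} (htb : t ≤ b)
    (hb1 : ∀ s ∈ Set.Icc t b, |f1 s| ≤ F1) (hb2 : ∀ s ∈ Set.Icc t b, |f2 s| ≤ F2)
    (hb1' : ∀ s ∈ Set.Icc t b, |deriv f1 s| ≤ F1')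
    (hb2' : ∀ s ∈ Set.Icc t b, |deriv f2 s| ≤ F2') :
    ‖Us1 H1 H2 f1 f2 b t - U b t‖ ≤
      ((1/2) * F1' * ‖H1‖ + (1/2) * F2' * ‖H2‖ + (1/2) * F1 * F2 * ‖matComm H1 H2‖) * (b - t) ^ 2
        + (1/6) * F1 * F2' * ‖matComm H1 H2‖ * (b - t) ^ 3 := by
  set K := F1' * ‖H1‖ + F2' * ‖H2‖
  set C := ‖matComm H1 H2‖
  have hφ (c τ : ℝ) : HasDerivAt (fun τ => (τ - t) * c) c τ := by
    simpa using ((hasDerivAt_id τ).sub_const t).mul_const c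
  have hbIcc : b ∈ Set.Icc t b := ⟨htb, le_rfl⟩
  -- the cubic is the primitive vanishing at `t` of
  -- `K (b - s) + F1 F2 C (s - t) + F1 F2' C (s - t) (b - s)`
  refine (hU.isPropagator.norm_exp_mul_exp_sub_le hH1.isSelfAdjoint hH2.isSelfAdjoint
    (hφ (f1 b)) (hφ (f2 b)) htb (by simp) (by simp)
    (hasDerivAt_cubic_sub (K * (b - t)) ((F1 * F2 * C - K + F1 * F2' * C * (b - t)) / 2)
      (-(F1 * F2' * C) / 3) t) (by simp) fun s hs => ?_).trans_eq (by ring)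
  have hs' : s ∈ Set.Icc t b := Set.Ico_subset_Icc_self hs
  have hbs : |b - s| = b - s := abs_of_nonneg (sub_nonneg.mpr hs.2.le)
  have hd1 : |f1 b - f1 s| ≤ F1' * (b - s) :=
    hbs ▸ abs_sub_le_of_abs_deriv_le hf1 hb1' hs' hbIcc
  have hd2 : |f2 b - f2 s| ≤ F2' * (b - s) :=
    hbs ▸ abs_sub_le_of_abs_deriv_le hf2 hb2' hs' hbIcc
  have hf1b : |f1 b| ≤ F1 := hb1 b hbIcc
  have hf2b : |f2 b| ≤ F2 + F2' * (b - s) :=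
    calc |f2 b| ≤ |f2 s| + |f2 b - f2 s| := by simpa using abs_add_le (f2 s) (f2 b - f2 s)
      _ ≤ F2 + F2' * (b - s) := add_le_add (hb2 s hs') hd2
  have hF1 : 0 ≤ F1 := (abs_nonneg _).trans hf1b
  have hst : 0 ≤ s - t := sub_nonneg.mpr hs.1
  rw [abs_mul, abs_of_nonneg hst]
  calc |f1 b - f1 s| * ‖H1‖ + |f2 b - f2 s| * ‖H2‖ + |f1 b| * ((s - t) * |f2 b|) * C
      ≤ F1' * (b - s) * ‖H1‖ + F2' * (b - s) * ‖H2‖ +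
          F1 * ((s - t) * (F2 + F2' * (b - s))) * C := by
        gcongr
    _ = _ := by ring

end TrotterStep

section Telescoping
variable {n : ℕ}

lemma prodSteps_mem_unitary {f : ℕ → Mat n} (hf : ∀ l, f l ∈ unitary (Mat n)) :
    ∀ L, prodSteps f L ∈ unitary (Mat n)
  | 0 => one_mem _
  | L + 1 => mul_mem (hf L) (prodSteps_mem_unitary hf L)

lemma norm_prodSteps_sub_prodSteps_le {S V : ℕ → Mat n} (hS : ∀ l, S l ∈ unitary (Mat n))
    (hV : ∀ l, V l ∈ unitary (Mat n)) :
    ∀ L, ‖prodSteps S L - prodSteps V L‖ ≤ ∑ l ∈ Finset.range L, ‖S l - V l‖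
  | 0 => by simp [prodSteps]
  | L + 1 => by
    have hsplit : prodSteps S (L + 1) - prodSteps V (L + 1) =
        S L * (prodSteps S L - prodSteps V L) + (S L - V L) * prodSteps V L := by
      simp only [prodSteps]
      noncomm_ring
    rw [hsplit, Finset.sum_range_succ]
    refine (norm_add_le _ _).trans ?_
    rw [CStarRing.norm_mem_unitary_mul _ (hS L),
      CStarRing.norm_mul_mem_unitary _ (prodSteps_mem_unitary hV L)]
    gcongr
    exact norm_prodSteps_sub_prodSteps_le hS hV L

lemma IsPropagator.prodSteps_eq {H : ℝ → Mat n} {U : ℝ → ℝ → Mat n} (hU : IsPropagator H U)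
    (hH : ∀ t, IsSelfAdjoint (H t)) (x : ℕ → ℝ) :
    ∀ k, prodSteps (fun l => U (x (l + 1)) (x l)) k = U (x k) (x 0)
  | 0 => (hU.1 _).symm
  | k + 1 => by rw [prodSteps, hU.prodSteps_eq hH x k, hU.mul_apply hH]

theorem IsPropagator.norm_trotterProd_sub_le {H : ℝ → Mat n} {U : ℝ → ℝ → Mat n}
    (hU : IsPropagator H U) (hH : ∀ t, IsSelfAdjoint (H t)) {step : ℝ → ℝ → Mat n}
    (hstep : ∀ b a, step b a ∈ unitary (Mat n)) {T : ℝ} (hT : 0 ≤ T) {L : ℕ} (hL : L ≠ 0)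
    {e : ℝ → ℝ}
    (hloc : ∀ a b, a ≤ b → Set.Icc a b ⊆ Set.Icc 0 T → ‖step b a - U b a‖ ≤ e (b - a)) :
    ‖trotterProd step T L - U T 0‖ ≤ L * e (T / L) := by
  have hLR : (0 : ℝ) < L := Nat.cast_pos.mpr (Nat.pos_of_ne_zero hL)
  have hexact := hU.prodSteps_eq hH (fun l => l * T / L) L
  simp only [Nat.cast_add, Nat.cast_one, Nat.cast_zero, zero_mul, zero_div] at hexact
  rw [mul_div_cancel_left₀ T hLR.ne'] at hexact
  have hmono (l : ℕ) : l * T / L ≤ (l + 1) * T / L := by gcongr; linarith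
  have hsub {l : ℕ} (hl : l < L) : Set.Icc (l * T / L) ((l + 1) * T / L) ⊆ Set.Icc 0 T := by
    refine Set.Icc_subset_Icc (by positivity) ?_
    rw [div_le_iff₀ hLR, mul_comm T]
    gcongr
    exact_mod_cast hl
  have hlen (l : ℕ) : ((l : ℝ) + 1) * T / L - l * T / L = T / L := by ring
  rw [trotterProd, ← hexact]
  calc _ ≤ ∑ l ∈ Finset.range L, ‖step (((l : ℝ) + 1) * T / L) (l * T / L) -
        U (((l : ℝ) + 1) * T / L) (l * T / L)‖ :=
        norm_prodSteps_sub_prodSteps_le (fun _ => hstep _ _) (fun _ => hU.mem_unitary hH _ _) L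
    _ ≤ ∑ _l ∈ Finset.range L, e (T / L) := Finset.sum_le_sum fun l hl =>
        hlen l ▸ hloc _ _ (hmono l) (hsub (Finset.mem_range.mp hl))
    _ = L * e (T / L) := by simp

end Telescoping

theorem global_opnorm_error_first_order_Trotter_general
    {n : ℕ} (H1 H2 : Mat n)
    (hH1 : H1.IsHermitian) (hH2 : H2.IsHermitian)
    (f1 f2 : ℝ → ℝ) (hf1 : ContDiff ℝ 1 f1) (hf2 : ContDiff ℝ 1 f2)
    (U : ℝ → ℝ → Mat n) (hU : IsEvolution H1 H2 f1 f2 U)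
    (T : ℝ) (hT : 0 < T) (L : ℕ) (hL : 0 < L)
    (F1 F2 F1' F2' : ℝ)
    (hb1 : ∀ t ∈ Set.Icc (0:ℝ) T, |f1 t| ≤ F1)
    (hb2 : ∀ t ∈ Set.Icc (0:ℝ) T, |f2 t| ≤ F2)
    (hb1' : ∀ t ∈ Set.Icc (0:ℝ) T, |deriv f1 t| ≤ F1')
    (hb2' : ∀ t ∈ Set.Icc (0:ℝ) T, |deriv f2 t| ≤ F2') :
    ‖trotterProd (Us1 H1 H2 f1 f2) T L - U T 0‖ ≤
      ((1/2) * F1' * ‖H1‖ + (1/2) * F2' * ‖H2‖ + (1/2) * F1 * F2 * ‖matComm H1 H2‖)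
          * T^2 / L
        + ((1/6) * F1 * F2' * ‖matComm H1 H2‖) * T^3 / L^2 ∧
    ‖trotterProd (Ug1 H1 H2 f1 f2) T L - U T 0‖ ≤
      (1/2) * F1 * F2 * ‖matComm H1 H2‖ * T^2 / L := by
  have hHam (t : ℝ) : IsSelfAdjoint (Ham H1 H2 f1 f2 t) :=
    hH1.isSelfAdjoint.ofReal_smul_add_ofReal_smul hH2.isSelfAdjoint _ _
  constructor
  · refine (hU.isPropagator.norm_trotterProd_sub_le hHam (Us1_mem_unitary hH1 hH2) hT.le
      hL.ne' (e := fun h => ((1/2) * F1' * ‖H1‖ + (1/2) * F2' * ‖H2‖ +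
        (1/2) * F1 * F2 * ‖matComm H1 H2‖) * h ^ 2 + (1/6) * F1 * F2' * ‖matComm H1 H2‖ * h ^ 3)
      fun a b hab hsub => hU.norm_Us1_sub_le hH1 hH2 (hf1.differentiable one_ne_zero)
        (hf2.differentiable one_ne_zero) hab (fun s hs => hb1 s (hsub hs))
        (fun s hs => hb2 s (hsub hs)) (fun s hs => hb1' s (hsub hs))
        (fun s hs => hb2' s (hsub hs))).trans_eq ?_
    field_simp
  · refine (hU.isPropagator.norm_trotterProd_sub_le hHam (Ug1_mem_unitary hH1 hH2) hT.le
      hL.ne' (e := fun h => F1 * F2 * ‖matComm H1 H2‖ * h ^ 2 / 2)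
      fun a b hab hsub => hU.norm_Ug1_sub_le hH1 hH2 hf1.continuous hf2.continuous hab
        (fun s hs => hb1 s (hsub hs)) (fun s hs => hb2 s (hsub hs))).trans_eq ?_
    field_simp

/-- **Global operator norm error bounds for the first-order Trotter formulae.** -/
theorem global_opnorm_error_first_order_Trotter
    {n : ℕ} (hn : 0 < n) (H1 H2 : Mat n)
    (hH1 : H1.IsHermitian) (hH2 : H2.IsHermitian)
    (f1 f2 : ℝ → ℝ) (hf1 : ContDiff ℝ 1 f1) (hf2 : ContDiff ℝ 1 f2)
    (U : ℝ → ℝ → Mat n) (hU : IsEvolution H1 H2 f1 f2 U)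
    (T : ℝ) (hT : 0 < T) (L : ℕ) (hL : 0 < L)
    (F1 F2 F1' F2' : ℝ) (hF1 : 0 ≤ F1) (hF2 : 0 ≤ F2) (hF1' : 0 ≤ F1') (hF2' : 0 ≤ F2')
    (hb1 : ∀ t ∈ Set.Icc (0:ℝ) T, |f1 t| ≤ F1)
    (hb2 : ∀ t ∈ Set.Icc (0:ℝ) T, |f2 t| ≤ F2)
    (hb1' : ∀ t ∈ Set.Icc (0:ℝ) T, |deriv f1 t| ≤ F1')
    (hb2' : ∀ t ∈ Set.Icc (0:ℝ) T, |deriv f2 t| ≤ F2') :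
    ‖trotterProd (Us1 H1 H2 f1 f2) T L - U T 0‖ ≤
      ((1/2) * F1' * ‖H1‖ + (1/2) * F2' * ‖H2‖ + (1/2) * F1 * F2 * ‖matComm H1 H2‖)
          * T^2 / L
        + ((1/6) * F1 * F2' * ‖matComm H1 H2‖) * T^3 / L^2 ∧
    ‖trotterProd (Ug1 H1 H2 f1 f2) T L - U T 0‖ ≤
      (1/2) * F1 * F2 * ‖matComm H1 H2‖ * T^2 / L :=
  global_opnorm_error_first_order_Trotter_general H1 H2 hH1 hH2 f1 f2 hf1 hf2 U hU T hT L hL F1 F2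
    F1' F2' hb1 hb2 hb1' hb2'
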